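/- arXiv:1310.8124 — 3 statements merged into one kernel-verified Lean document; each statement's English description precedes it below -/
import Mathlib

section
/- Let f be a multiplicative ℂ-linear map on m×m complex matrices with fⁿ = id, Gᵢ(X) = (A·f(A)⋯fⁱ⁻¹(A))·fⁱ(X)·(fⁱ⁻¹(B)⋯f(B)·B), and F(𝒳) = (1/n)·Σ_{i=0}^{n-1} (Gᵢ(𝒳) + (n−i−1)·Gᵢ(C)). If 𝒳 solves the Stein equation 𝒳 = Gₙ(𝒳) + Σ_{i=0}^{n-1} Gᵢ(C), then F(F(𝒳)) = F(𝒳), i.e., F(𝒳) is a fixed point of F. -/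
open Finset

/-- Ordered product `A · f(A) · f²(A) ⋯ f^{i-1}(A)`. -/
noncomputable def prodA {m : ℕ} (f : Matrix (Fin m) (Fin m) ℂ → Matrix (Fin m) (Fin m) ℂ)
    (A : Matrix (Fin m) (Fin m) ℂ) : ℕ → Matrix (Fin m) (Fin m) ℂ
  | 0 => 1
  | i + 1 => prodA f A i * f^[i] A

/-- Ordered product `f^{i-1}(B) ⋯ f(B) · B`. -/
noncomputable def prodB {m : ℕ} (f : Matrix (Fin m) (Fin m) ℂ → Matrix (Fin m) (Fin m) ℂ)
    (B : Matrix (Fin m) (Fin m) ℂ) : ℕ → Matrix (Fin m) (Fin m) ℂ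
  | 0 => 1
  | i + 1 => f^[i] B * prodB f B i

/-- `Gᵢ(X) = (A·f(A)⋯f^{i-1}(A)) · fⁱ(X) · (f^{i-1}(B)⋯f(B)·B)`. -/
noncomputable def G {m : ℕ} (f : Matrix (Fin m) (Fin m) ℂ → Matrix (Fin m) (Fin m) ℂ)
    (A B : Matrix (Fin m) (Fin m) ℂ) (i : ℕ) (X : Matrix (Fin m) (Fin m) ℂ) :
    Matrix (Fin m) (Fin m) ℂ :=
  prodA f A i * f^[i] X * prodB f B i

/-- The averaging operator `F(𝒳) = (1/n)·Σ_{i<n} (Gᵢ(𝒳) + (n−i−1)·Gᵢ(C))`. -/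
noncomputable def Fop {m : ℕ} (f : Matrix (Fin m) (Fin m) ℂ → Matrix (Fin m) (Fin m) ℂ)
    (A B C : Matrix (Fin m) (Fin m) ℂ) (n : ℕ) (𝒳 : Matrix (Fin m) (Fin m) ℂ) :
    Matrix (Fin m) (Fin m) ℂ :=
  ((n : ℂ)⁻¹) • ∑ i ∈ range n, (G f A B i 𝒳 + ((n - i - 1 : ℕ) : ℂ) • G f A B i C)

/-!
Since `Gᵢ₊₁(X) = Gᵢ(G₁(X))`, we have `Gᵢ = Tⁱ` for the linear map `T = G₁`. Telescoping `T`
against the geometric sums and using the Stein equation shows that `Y = F(𝒳)` satisfies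
`Y = T Y + C`. Iterating, `Tⁱ Y = Y - Σ_{j<i} Tʲ C`, and averaging over `i < n` returns `Y`
because `Σ_{i<n} Σ_{j<i} Tʲ C = Σ_{i<n} (n - i - 1) Tⁱ C`.
-/

section SteinAverage

variable {K V : Type*} [DivisionRing K] [AddCommGroup V] [Module K V]
  (T : Module.End K V) (c : V) (n : ℕ)

/-- The operator `F` of the statement, with `Gᵢ = Tⁱ`. -/
noncomputable def steinAverage (x : V) : V :=
  (n : K)⁻¹ • ∑ i ∈ range n, ((T ^ i) x + ((n - i - 1 : ℕ) : K) • (T ^ i) c)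

theorem Finset.sum_range_tsub_smul {M : Type*} [AddCommMonoid M] (v : ℕ → M) :
    ∑ i ∈ range n, (n - i - 1) • v i = ∑ k ∈ range n, ∑ j ∈ range k, v j := by
  induction n with
  | zero => simp
  | succ n ih =>
    rw [sum_range_succ (fun k => ∑ j ∈ range k, v j), ← ih, sum_range_succ, ← sum_add_distrib,
      show n + 1 - n - 1 = 0 by omega, zero_smul, add_zero]
    refine sum_congr rfl fun i hi => ?_
    rw [show n + 1 - i - 1 = n - i - 1 + 1 by grind, succ_nsmul]

theorem steinAverage_eq_smul_sum (x : V) :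
    steinAverage T c n x = (n : K)⁻¹ •
      ((∑ i ∈ range n, T ^ i) x + ∑ k ∈ range n, (∑ j ∈ range k, T ^ j) c) := by
  simp only [steinAverage, sum_add_distrib, Nat.cast_smul_eq_nsmul, sum_range_tsub_smul,
    LinearMap.sum_apply]

variable {T c}

theorem apply_geom_sum_apply_add (k : ℕ) (v : V) :
    T ((∑ j ∈ range k, T ^ j) v) + v = (T ^ k) v + (∑ j ∈ range k, T ^ j) v := by
  simpa using LinearMap.congr_fun ((geom_sum_succ (x := T) (n := k)).symm.trans geom_sum_succ') v

theorem apply_sum_geom_sum_apply_add_nsmul (v : V) :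
    T (∑ k ∈ range n, (∑ j ∈ range k, T ^ j) v) + n • v
      = ∑ k ∈ range n, (∑ j ∈ range k, T ^ j) v + (∑ j ∈ range n, T ^ j) v := by
  calc _ = ∑ k ∈ range n, (T ((∑ j ∈ range k, T ^ j) v) + v) := by
        rw [map_sum, sum_add_distrib, sum_const, card_range]
    _ = ∑ k ∈ range n, (∑ j ∈ range (k + 1), T ^ j) v :=
        sum_congr rfl fun k _ => by
          rw [apply_geom_sum_apply_add, geom_sum_succ', LinearMap.add_apply]
    _ = _ := by
        simpa using (sum_range_succ' (fun k => (∑ j ∈ range k, T ^ j) v) n).symm.trans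
          (sum_range_succ _ n)

theorem eq_pow_apply_add_geom_sum_apply {y : V} (hy : y = T y + c) (k : ℕ) :
    y = (T ^ k) y + (∑ j ∈ range k, T ^ j) c := by
  induction k with
  | zero => simp
  | succ k ih =>
    rw [geom_sum_succ', LinearMap.add_apply, pow_succ, Module.End.mul_apply, ← add_assoc,
      ← map_add, ← hy, ← ih]

theorem steinAverage_eq_self {y : V} (hn : (n : K) ≠ 0) (hy : y = T y + c) :
    steinAverage T c n y = y := by
  have hsum : (∑ i ∈ range n, T ^ i) y + ∑ k ∈ range n, (∑ j ∈ range k, T ^ j) c = n • y := by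
    calc _ = ∑ k ∈ range n, y := by
          rw [LinearMap.sum_apply, ← sum_add_distrib]
          exact sum_congr rfl fun k _ => (eq_pow_apply_add_geom_sum_apply hy k).symm
      _ = n • y := by rw [sum_const, card_range]
  rw [steinAverage_eq_smul_sum, hsum, ← Nat.cast_smul_eq_nsmul K, inv_smul_smul₀ hn]

theorem steinAverage_eq_apply_add {x : V} (hn : (n : K) ≠ 0)
    (hx : x = (T ^ n) x + (∑ j ∈ range n, T ^ j) c) :
    steinAverage T c n x = T (steinAverage T c n x) + c := by
  rw [steinAverage_eq_smul_sum]
  set S := (∑ i ∈ range n, T ^ i) x + ∑ k ∈ range n, (∑ j ∈ range k, T ^ j) c with hS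
  have key : T S + n • c = S := by
    refine add_right_cancel (b := x) ?_
    calc T S + n • c + x
        = (T ((∑ i ∈ range n, T ^ i) x) + x)
          + (T (∑ k ∈ range n, (∑ j ∈ range k, T ^ j) c) + n • c) := by
          rw [map_add]; abel
      _ = S + ((T ^ n) x + (∑ j ∈ range n, T ^ j) c) := by
          rw [apply_geom_sum_apply_add, apply_sum_geom_sum_apply_add_nsmul, hS]; abel
      _ = S + x := by rw [← hx]
  conv_lhs => rw [← key]
  rw [map_smul, smul_add, ← Nat.cast_smul_eq_nsmul K, inv_smul_smul₀ hn]

theorem steinAverage_steinAverage {x : V} (hx : x = (T ^ n) x + (∑ j ∈ range n, T ^ j) c) :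
    steinAverage T c n (steinAverage T c n x) = steinAverage T c n x := by
  by_cases hn : (n : K) = 0
  · simp [steinAverage, hn] -- `(n : K)⁻¹ = 0`, so the average vanishes
  · exact steinAverage_eq_self n hn (steinAverage_eq_apply_add n hn hx)

end SteinAverage

section Matrix

variable {m : ℕ} {f : Matrix (Fin m) (Fin m) ℂ → Matrix (Fin m) (Fin m) ℂ}

noncomputable def sandwichMap (hlin : IsLinearMap ℂ f) (A B : Matrix (Fin m) (Fin m) ℂ) :
    Module.End ℂ (Matrix (Fin m) (Fin m) ℂ) :=
  LinearMap.mulRight ℂ B ∘ₗ LinearMap.mulLeft ℂ A ∘ₗ hlin.mk' f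

theorem G_succ (hmul : ∀ X Y, f (X * Y) = f X * f Y) (A B : Matrix (Fin m) (Fin m) ℂ) (i : ℕ)
    (X : Matrix (Fin m) (Fin m) ℂ) : G f A B (i + 1) X = G f A B i (A * f X * B) := by
  have hmul_iter := Function.Semiconj₂.iterate hmul i
  simp only [G, prodA, prodB, hmul_iter _ _, Function.iterate_succ_apply, mul_assoc]

theorem G_eq_sandwichMap_pow_apply (hlin : IsLinearMap ℂ f) (hmul : ∀ X Y, f (X * Y) = f X * f Y)
    (A B : Matrix (Fin m) (Fin m) ℂ) (i : ℕ) (X : Matrix (Fin m) (Fin m) ℂ) :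
    G f A B i X = (sandwichMap hlin A B ^ i) X := by
  induction i generalizing X with
  | zero => simp [G, prodA, prodB]
  | succ i ih => rw [G_succ hmul, ih, pow_succ, Module.End.mul_apply]; rfl

end Matrix

theorem stmt_7_general {m n : ℕ}
    (f : Matrix (Fin m) (Fin m) ℂ → Matrix (Fin m) (Fin m) ℂ)
    (hlin : IsLinearMap ℂ f) (hmul : ∀ X Y, f (X * Y) = f X * f Y)
    (A B C 𝒳 : Matrix (Fin m) (Fin m) ℂ)
    (h𝒳 : 𝒳 = G f A B n 𝒳 + ∑ i ∈ range n, G f A B i C) :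
    Fop f A B C n (Fop f A B C n 𝒳) = Fop f A B C n 𝒳 := by
  have hG := G_eq_sandwichMap_pow_apply hlin hmul A B
  have hFop : Fop f A B C n = steinAverage (sandwichMap hlin A B) C n := by
    ext1 X
    simp only [Fop, steinAverage, hG]
  rw [hFop]
  refine steinAverage_steinAverage n ?_
  simpa only [LinearMap.sum_apply, hG] using h𝒳

theorem stmt_7 {m n : ℕ} (hn : 0 < n)
    (f : Matrix (Fin m) (Fin m) ℂ → Matrix (Fin m) (Fin m) ℂ)
    (hlin : IsLinearMap ℂ f) (hmul : ∀ X Y, f (X * Y) = f X * f Y)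
    (hper : f^[n] = id)
    (A B C 𝒳 : Matrix (Fin m) (Fin m) ℂ)
    (h𝒳 : 𝒳 = G f A B n 𝒳 + ∑ i ∈ range n, G f A B i C) :
    Fop f A B C n (Fop f A B C n 𝒳) = Fop f A B C n 𝒳 :=
  stmt_7_general f hlin hmul A B C 𝒳 h𝒳
end

section
/- Let f be a multiplicative ℂ-linear map on m×m complex matrices with fⁿ = id, and Gᵢ(X) = (A·f(A)⋯fⁱ⁻¹(A))·fⁱ(X)·(fⁱ⁻¹(B)⋯f(B)·B). If 𝒳 solves the Stein equation 𝒳 = Gₙ(𝒳) + Σ_{i=0}^{n-1} Gᵢ(C), then Σ_{i=0}^{n-1} Gᵢ(F(𝒳)) = Σ_{i=0}^{n-1} Gᵢ(𝒳), where F(𝒳) = (1/n)·Σ_{i=0}^{n-1} (Gᵢ(𝒳) + (n−i−1)·Gᵢ(C)). -/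
/-!
Write `T X = A * f X * B`. Multiplicativity of `f` gives `Gᵢ = Tⁱ`, so everything is a
polynomial in the single linear map `T`. With `P = ∑_{i<n} Tⁱ` and `Q = ∑_{i<n} (n-i-1) Tⁱ`
one has `P (1 - T) = 1 - Tⁿ` and `Q (1 - T) = n - P`. The Stein equation says
`P C = (1 - T) P 𝒳`, hence `P (P 𝒳 + Q C) = P P 𝒳 + Q (1 - T) P 𝒳 = n • P 𝒳`, and dividing by
`n` gives the claim.
-/

open Finset

theorem sum_range_sum_range_eq_sum_nsmul {M : Type*} [AddCommMonoid M] (a : ℕ → M) (n : ℕ) :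
    ∑ j ∈ range n, ∑ k ∈ range j, a k = ∑ k ∈ range n, (n - k - 1) • a k := by
  induction n with
  | zero => simp
  | succ n ih =>
    rw [sum_range_succ, ih, sum_range_succ, show n + 1 - n - 1 = 0 by omega, zero_smul,
      add_zero, ← sum_add_distrib]
    refine sum_congr rfl fun k hk => ?_
    rw [show n + 1 - k - 1 = n - k - 1 + 1 by have := mem_range.mp hk; omega, succ_nsmul]

theorem sum_range_nsmul_pow_mul_one_sub {R : Type*} [Ring R] (t : R) (n : ℕ) :
    (∑ k ∈ range n, (n - k - 1) • t ^ k) * (1 - t) = n - ∑ i ∈ range n, t ^ i := by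
  rw [← sum_range_sum_range_eq_sum_nsmul, sum_mul]
  simp only [geom_sum_mul_neg, sum_sub_distrib, sum_const, card_range, nsmul_one]

section Stein

variable {K M : Type*} [Field K] [CharZero K] [AddCommGroup M] [Module K M]

open Module.End in
theorem sum_pow_apply_average_eq_of_stein (T : Module.End K M) {n : ℕ} {x c : M}
    (hx : x = (T ^ n) x + ∑ i ∈ range n, (T ^ i) c) :
    ∑ i ∈ range n, (T ^ i)
        ((n : K)⁻¹ • ∑ i ∈ range n, ((T ^ i) x + ((n - i - 1 : ℕ) : K) • (T ^ i) c))
      = ∑ i ∈ range n, (T ^ i) x := by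
  rcases Nat.eq_zero_or_pos n with rfl | hn
  · simp
  set P : Module.End K M := ∑ i ∈ range n, T ^ i
  set Q : Module.End K M := ∑ k ∈ range n, (n - k - 1) • T ^ k
  have hPQ : P * Q = Q * P :=
    (Commute.sum_left _ _ _ fun i _ => Commute.sum_right _ _ _ fun k _ =>
      ((Commute.pow_pow_self T i k).smul_right _)).eq
  have hstein : P c = (1 - T) (P x) := by
    rw [← mul_apply, mul_neg_geom_sum, LinearMap.sub_apply, one_apply, LinearMap.sum_apply]
    exact eq_sub_of_add_eq' hx.symm
  have hQ : Q * (1 - T) = n - P := sum_range_nsmul_pow_mul_one_sub T n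
  have hsum : ∑ i ∈ range n, ((T ^ i) x + ((n - i - 1 : ℕ) : K) • (T ^ i) c) = P x + Q c := by
    simp only [P, Q, sum_add_distrib, LinearMap.sum_apply, LinearMap.smul_apply,
      Nat.cast_smul_eq_nsmul]
  have key : P (P x + Q c) = (n : K) • P x := by
    calc P (P x + Q c) = P (P x) + Q (P c) := by rw [map_add, ← mul_apply P Q, hPQ, mul_apply]
      _ = P (P x) + (Q * (1 - T)) (P x) := by rw [hstein, mul_apply]
      _ = (n : K) • P x := by rw [hQ]; simp [Nat.cast_smul_eq_nsmul]
  rw [hsum, ← LinearMap.sum_apply, ← LinearMap.sum_apply, map_smul, key, smul_smul,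
    inv_mul_cancel₀ (by exact_mod_cast hn.ne'), one_smul]

end Stein

section Matrix

variable {m : ℕ} (f : Matrix (Fin m) (Fin m) ℂ → Matrix (Fin m) (Fin m) ℂ)
  (hlin : IsLinearMap ℂ f) (A B : Matrix (Fin m) (Fin m) ℂ)

noncomputable def steinMap : Module.End ℂ (Matrix (Fin m) (Fin m) ℂ) :=
  LinearMap.mulLeft ℂ A ∘ₗ LinearMap.mulRight ℂ B ∘ₗ hlin.mk' f

theorem steinMap_apply (X : Matrix (Fin m) (Fin m) ℂ) :
    steinMap f hlin A B X = A * f X * B :=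
  (mul_assoc _ _ _).symm

theorem G_eq_steinMap_pow_apply (hmul : ∀ X Y, f (X * Y) = f X * f Y) (i : ℕ)
    (X : Matrix (Fin m) (Fin m) ℂ) : G f A B i X = (steinMap f hlin A B ^ i) X := by
  induction i generalizing X with
  | zero => simp [G, prodA, prodB]
  | succ i ih =>
    have hmul_iterate : ∀ X Y, f^[i] (X * Y) = f^[i] X * f^[i] Y :=
      Function.Semiconj₂.iterate hmul i
    calc G f A B (i + 1) X = G f A B i (A * f X * B) := by
          simp only [G, prodA, prodB, Function.iterate_succ_apply, hmul_iterate, mul_assoc]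
      _ = (steinMap f hlin A B ^ (i + 1)) X := by
          rw [ih, pow_succ, Module.End.mul_apply, steinMap_apply]

end Matrix

theorem stmt_8_general {m n : ℕ}
    (f : Matrix (Fin m) (Fin m) ℂ → Matrix (Fin m) (Fin m) ℂ)
    (hlin : IsLinearMap ℂ f) (hmul : ∀ X Y, f (X * Y) = f X * f Y)
    (A B C 𝒳 : Matrix (Fin m) (Fin m) ℂ)
    (h𝒳 : 𝒳 = G f A B n 𝒳 + ∑ i ∈ range n, G f A B i C) :
    ∑ i ∈ range n, G f A B i (Fop f A B C n 𝒳) = ∑ i ∈ range n, G f A B i 𝒳 := by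
  simp only [Fop, G_eq_steinMap_pow_apply f hlin A B hmul] at h𝒳 ⊢
  exact sum_pow_apply_average_eq_of_stein _ h𝒳

theorem stmt_8 {m n : ℕ} (hn : 0 < n)
    (f : Matrix (Fin m) (Fin m) ℂ → Matrix (Fin m) (Fin m) ℂ)
    (hlin : IsLinearMap ℂ f) (hmul : ∀ X Y, f (X * Y) = f X * f Y)
    (hper : f^[n] = id)
    (A B C 𝒳 : Matrix (Fin m) (Fin m) ℂ)
    (h𝒳 : 𝒳 = G f A B n 𝒳 + ∑ i ∈ range n, G f A B i C) :
    ∑ i ∈ range n, G f A B i (Fop f A B C n 𝒳) = ∑ i ∈ range n, G f A B i 𝒳 :=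
  stmt_8_general f hlin hmul A B C 𝒳 h𝒳
end

section
/- For m×m complex matrices 𝒜, ℬ, 𝒞 with ρ(𝒜)·ρ(ℬ) < 1, the Smith iteration X₀ = 0, X_{k+1} = 𝒜·X_k·ℬ + 𝒞 converges to the unique solution X of the Stein equation X = 𝒜·X·ℬ + 𝒞, and X_k = Σ_{j=0}^{k-1} 𝒜ʲ·𝒞·ℬʲ for all k. -/
open Finset Filter

/-- Spectral radius of a complex matrix: supremum of the absolute values of its
eigenvalues. -/
noncomputable def specRad {m : ℕ} (A : Matrix (Fin m) (Fin m) ℂ) : ℝ :=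
  sSup ((fun z : ℂ => ‖z‖) '' spectrum ℂ A)

/-!
By Gelfand's formula `(‖𝒜ⁿ‖ ‖ℬⁿ‖) ^ (1/n) → ρ(𝒜) ρ(ℬ) < 1`, so the root test makes
`∑ ‖𝒜ⁿ‖ ‖ℬⁿ‖` converge. In any Banach algebra this suffices: `∑ aⁿ c bⁿ` then converges, its
partial sums are the Smith iterates, and its sum is a fixed point of `X ↦ a X b + c`; the
difference `D` of two fixed points satisfies `D = aⁿ D bⁿ`, so `‖D‖ ≤ ‖D‖ ‖aⁿ‖ ‖bⁿ‖ → 0`.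
-/

open scoped ENNReal NNReal Topology

theorem NNReal.summable_coe_of_tendsto_rpow_one_div_lt_one {u : ℕ → ℝ≥0} {L : ℝ≥0∞}
    (hu : Tendsto (fun n : ℕ => (u n : ℝ≥0∞) ^ (1 / n : ℝ)) atTop (𝓝 L)) (hL : L < 1) :
    Summable fun n => (u n : ℝ) := by
  obtain ⟨c, hLc, hc1⟩ := ENNReal.lt_iff_exists_nnreal_btwn.mp hL
  refine Summable.of_norm_bounded_eventually_nat
    (summable_geometric_of_lt_one c.coe_nonneg (by exact_mod_cast hc1)) ?_
  filter_upwards [hu.eventually_lt_const hLc, eventually_ge_atTop 1] with n hn hn1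
  have hn0 : (0 : ℝ) < n := by exact_mod_cast hn1
  rw [one_div, ENNReal.rpow_inv_lt_iff hn0, ENNReal.rpow_natCast] at hn
  have hle : u n ≤ c ^ n := (by exact_mod_cast hn : u n < c ^ n).le
  simpa using NNReal.coe_le_coe.mpr hle

section Stein

variable {R : Type*}

theorem eq_sum_pow_mul_mul_pow_of_rec [Semiring R] {a b c : R} {X : ℕ → R}
    (h0 : X 0 = 0) (hrec : ∀ k, X (k + 1) = a * X k * b + c) (k : ℕ) :
    X k = ∑ j ∈ range k, a ^ j * c * b ^ j := by
  induction k with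
  | zero => simpa using h0
  | succ k ih =>
    rw [hrec, ih, sum_range_succ', mul_sum, sum_mul]
    simp [pow_succ', pow_mul_comm', mul_assoc]

theorem pow_mul_mul_pow_eq_of_eq_mul_mul [Monoid R] {a b d : R} (h : d = a * d * b) (k : ℕ) :
    a ^ k * d * b ^ k = d := by
  induction k with
  | zero => simp
  | succ k ih =>
    calc a ^ (k + 1) * d * b ^ (k + 1) = a ^ k * (a * d * b) * b ^ k := by
          rw [pow_succ, pow_succ']; simp only [mul_assoc]
      _ = d := by rw [← h, ih]

variable [NormedRing R] {a b : R}

theorem summable_pow_mul_mul_pow [CompleteSpace R] (h : Summable fun n => ‖a ^ n‖ * ‖b ^ n‖)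
    (c : R) : Summable fun n => a ^ n * c * b ^ n := by
  refine Summable.of_norm_bounded (h.mul_left ‖c‖) fun n => ?_
  calc ‖a ^ n * c * b ^ n‖ ≤ ‖a ^ n‖ * ‖c‖ * ‖b ^ n‖ := norm_mul₃_le
    _ = ‖c‖ * (‖a ^ n‖ * ‖b ^ n‖) := by ring

theorem eq_zero_of_eq_mul_mul (h : Summable fun n => ‖a ^ n‖ * ‖b ^ n‖) {d : R}
    (hd : d = a * d * b) : d = 0 := by
  have hle : ∀ n, ‖d‖ ≤ ‖d‖ * (‖a ^ n‖ * ‖b ^ n‖) := fun n =>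
    calc ‖d‖ = ‖a ^ n * d * b ^ n‖ := by rw [pow_mul_mul_pow_eq_of_eq_mul_mul hd]
      _ ≤ ‖a ^ n‖ * ‖d‖ * ‖b ^ n‖ := norm_mul₃_le
      _ = ‖d‖ * (‖a ^ n‖ * ‖b ^ n‖) := by ring
  have hlim : Tendsto (fun n => ‖d‖ * (‖a ^ n‖ * ‖b ^ n‖)) atTop (𝓝 0) := by
    simpa using h.tendsto_atTop_zero.const_mul ‖d‖
  exact norm_le_zero_iff.mp (ge_of_tendsto' hlim hle)

theorem tsum_pow_mul_mul_pow_eq [CompleteSpace R] (h : Summable fun n => ‖a ^ n‖ * ‖b ^ n‖)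
    (c : R) : ∑' n, a ^ n * c * b ^ n = a * (∑' n, a ^ n * c * b ^ n) * b + c := by
  have hs := summable_pow_mul_mul_pow h c
  conv_lhs => rw [hs.tsum_eq_zero_add]
  rw [← hs.tsum_mul_left, ← (hs.mul_left a).tsum_mul_right]
  simp [pow_succ', pow_mul_comm', mul_assoc, add_comm]

theorem existsUnique_eq_mul_mul_add [CompleteSpace R] (h : Summable fun n => ‖a ^ n‖ * ‖b ^ n‖)
    (c : R) : ∃! X : R, X = a * X * b + c := by
  refine ⟨_, tsum_pow_mul_mul_pow_eq h c, fun Y hY => sub_eq_zero.mp (eq_zero_of_eq_mul_mul h ?_)⟩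
  set S := ∑' n, a ^ n * c * b ^ n
  calc Y - S = (a * Y * b + c) - (a * S * b + c) := by rw [← hY, ← tsum_pow_mul_mul_pow_eq h c]
    _ = a * (Y - S) * b := by noncomm_ring

theorem tendsto_tsum_pow_mul_mul_pow_of_rec [CompleteSpace R]
    (h : Summable fun n => ‖a ^ n‖ * ‖b ^ n‖) {c : R} {X : ℕ → R}
    (h0 : X 0 = 0) (hrec : ∀ k, X (k + 1) = a * X k * b + c) :
    Tendsto X atTop (𝓝 (∑' n, a ^ n * c * b ^ n)) := by
  rw [funext (eq_sum_pow_mul_mul_pow_of_rec h0 hrec)]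
  exact (summable_pow_mul_mul_pow h c).hasSum.tendsto_sum_nat

end Stein

section BanachAlgebra

variable {A : Type*} [NormedRing A] [NormedAlgebra ℂ A] [CompleteSpace A]

theorem spectralRadius_ne_top (a : A) : spectralRadius ℂ a ≠ ∞ :=
  ne_top_of_le_ne_top (by simp [ENNReal.mul_eq_top])
    (spectrum.spectralRadius_le_pow_nnnorm_pow_one_div ℂ a 0)

theorem summable_norm_pow_mul_norm_pow {a b : A}
    (h : spectralRadius ℂ a * spectralRadius ℂ b < 1) :
    Summable fun n => ‖a ^ n‖ * ‖b ^ n‖ := by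
  have hroot := ENNReal.Tendsto.mul
    (spectrum.pow_nnnorm_pow_one_div_tendsto_nhds_spectralRadius a)
    (Or.inr (spectralRadius_ne_top b))
    (spectrum.pow_nnnorm_pow_one_div_tendsto_nhds_spectralRadius b)
    (Or.inr (spectralRadius_ne_top a))
  simpa using NNReal.summable_coe_of_tendsto_rpow_one_div_lt_one
    (u := fun n => ‖a ^ n‖₊ * ‖b ^ n‖₊) (hroot.congr fun n => by simp [ENNReal.mul_rpow_of_nonneg]) h

end BanachAlgebra

theorem specRad_nonneg {m : ℕ} (A : Matrix (Fin m) (Fin m) ℂ) : 0 ≤ specRad A :=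
  Real.sSup_nonneg (by rintro x ⟨z, -, rfl⟩; exact norm_nonneg z)

theorem spectralRadius_le_ofReal_specRad {m : ℕ} (A : Matrix (Fin m) (Fin m) ℂ) :
    spectralRadius ℂ A ≤ ENNReal.ofReal (specRad A) := by
  refine iSup₂_le fun z hz => ?_
  calc (‖z‖₊ : ℝ≥0∞) = ENNReal.ofReal ‖z‖ := (ofReal_norm z).symm
    _ ≤ _ := ENNReal.ofReal_le_ofReal <|
      le_csSup ((Matrix.finite_spectrum A).image _).bddAbove ⟨z, hz, rfl⟩

theorem spectralRadius_mul_lt_one_of_specRad_mul_lt_one {m : ℕ} {A B : Matrix (Fin m) (Fin m) ℂ}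
    (h : specRad A * specRad B < 1) : spectralRadius ℂ A * spectralRadius ℂ B < 1 :=
  calc spectralRadius ℂ A * spectralRadius ℂ B
      ≤ ENNReal.ofReal (specRad A) * ENNReal.ofReal (specRad B) :=
        mul_le_mul' (spectralRadius_le_ofReal_specRad A) (spectralRadius_le_ofReal_specRad B)
    _ = ENNReal.ofReal (specRad A * specRad B) := (ENNReal.ofReal_mul (specRad_nonneg A)).symm
    _ < 1 := ENNReal.ofReal_lt_one.mpr h

theorem stmt_13 {m : ℕ} (𝒜 ℬ 𝒞 : Matrix (Fin m) (Fin m) ℂ)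
    (hρ : specRad 𝒜 * specRad ℬ < 1)
    (Xseq : ℕ → Matrix (Fin m) (Fin m) ℂ)
    (h0 : Xseq 0 = 0) (hrec : ∀ k, Xseq (k + 1) = 𝒜 * Xseq k * ℬ + 𝒞) :
    (∃! X : Matrix (Fin m) (Fin m) ℂ, X = 𝒜 * X * ℬ + 𝒞) ∧
    (∀ k, Xseq k = ∑ j ∈ range k, 𝒜 ^ j * 𝒞 * ℬ ^ j) ∧
    (∀ X : Matrix (Fin m) (Fin m) ℂ, X = 𝒜 * X * ℬ + 𝒞 →
      Tendsto Xseq atTop (nhds X)) := by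
  -- any submultiplicative norm inducing the product topology would do
  let _ : NormedRing (Matrix (Fin m) (Fin m) ℂ) := Matrix.linftyOpNormedRing
  let _ : NormedAlgebra ℂ (Matrix (Fin m) (Fin m) ℂ) := Matrix.linftyOpNormedAlgebra
  have hsum : Summable fun n => ‖𝒜 ^ n‖ * ‖ℬ ^ n‖ :=
    summable_norm_pow_mul_norm_pow (spectralRadius_mul_lt_one_of_specRad_mul_lt_one hρ)
  have hunique := existsUnique_eq_mul_mul_add hsum 𝒞
  refine ⟨hunique, eq_sum_pow_mul_mul_pow_of_rec h0 hrec, fun X hX => ?_⟩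
  rw [hunique.unique hX (tsum_pow_mul_mul_pow_eq hsum 𝒞)]
  exact tendsto_tsum_pow_mul_mul_pow_of_rec hsum h0 hrec
end
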